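/- arXiv:2512.06876 — 5 statements merged into one kernel-verified Lean document; each statement's English description precedes it below -/
import Mathlib

section
/- Let κ be a regular uncountable cardinal, λ a cardinal, and X = K_{λ,λ} the complete bipartite graph with parts A and B each of size λ. If λ is at least the density of the poset (stat_κ, ⊆) of stationary subsets of κ ordered by inclusion, then the stationary list colorability SList(X, κ) fails: there is a list function L : V → stat_κ admitting no good choice function. -/
open Cardinal Set

/-- C is a club (closed unbounded) subset of the ordinal o. -/
def IsClubIn (C : Set Ordinal) (o : Ordinal) : Prop :=
  C ⊆ Set.Iio o ∧ (∀ a < o, ∃ b ∈ C, a ≤ b ∧ b < o) ∧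
  ∀ a < o, 0 < a → (∀ b < a, ∃ x ∈ C, b < x ∧ x < a) → a ∈ C

/-- S is a stationary subset of the ordinal o. -/
def IsStationaryIn (S : Set Ordinal) (o : Ordinal) : Prop :=
  S ⊆ Set.Iio o ∧ ∀ C, IsClubIn C o → (S ∩ C).Nonempty

/-!
Label the vertices on each side by a dense family `d` of stationary sets, so that every `d i`
occurs as a list on both sides. For a good choice function `c`, the set `X = c[A]` meets every
`d i`, hence every club (each club is stationary, so contains some `d i`), so `X` is stationary
and contains some `d j`. The vertex of `B` labelled `d j` then gets a colour already used on `A`.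
-/

open Function

namespace IsClubIn

variable {C D : Set Ordinal} {o : Ordinal}

theorem exists_gt (ho : Order.IsSuccLimit o) (hC : IsClubIn C o) {a : Ordinal} (ha : a < o) :
    ∃ x ∈ C, a < x ∧ x < o := by
  obtain ⟨x, hxC, hax, hxo⟩ := hC.2.1 (a + 1) (ho.add_one_lt ha)
  exact ⟨x, hxC, (Order.lt_add_one_iff.2 le_rfl).trans_le hax, hxo⟩

theorem iSup_mem (hC : IsClubIn C o) {h : ℕ → Ordinal} (hh : StrictMono h) (hlt : ⨆ n, h n < o)
    (hfreq : ∀ n, ∃ m ≥ n, h m ∈ C) : ⨆ n, h n ∈ C := by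
  have h_lt_iSup : ∀ n, h n < ⨆ n, h n := fun n =>
    (hh n.lt_succ_self).trans_le (Ordinal.le_iSup h (n + 1))
  refine hC.2.2 _ hlt (pos_of_gt (h_lt_iSup 0)) fun b hb => ?_
  obtain ⟨n, hbn⟩ : ∃ n, b < h n := by
    by_contra! hle
    exact hb.not_ge (Ordinal.iSup_le hle)
  obtain ⟨m, hnm, hmC⟩ := hfreq n
  exact ⟨h m, hmC, hbn.trans_le (hh.monotone hnm), h_lt_iSup m⟩

/-- Alternating between `C` and `D` along an `ω`-sequence yields a common limit point, which stays
below `o` because `o` has uncountable cofinality. -/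
theorem inter_nonempty (ho : ℵ₀ < o.cof) (hC : IsClubIn C o) (hD : IsClubIn D o) :
    (C ∩ D).Nonempty := by
  have hlim : Order.IsSuccLimit o :=
    Ordinal.one_lt_cof_iff.1 (Cardinal.one_lt_aleph0.trans ho)
  choose! N hN using fun a (ha : a < o) => hC.exists_gt hlim ha
  choose! M hM using fun a (ha : a < o) => hD.exists_gt hlim ha
  set h : ℕ → Ordinal := fun n => (N ∘ M)^[n] 0
  have h_succ (n : ℕ) : h (n + 1) = N (M (h n)) := iterate_succ_apply' _ _ _
  have h_lt (n : ℕ) : h n < o := by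
    induction n with
    | zero => exact Ordinal.cof_pos.1 (Cardinal.aleph0_pos.trans ho)
    | succ n ih => rw [h_succ]; exact (hN _ (hM _ ih).2.2).2.2
  have h_lt_M (n : ℕ) : h n < M (h n) := (hM _ (h_lt n)).2.1
  have M_lt_h (n : ℕ) : M (h n) < h (n + 1) := h_succ n ▸ (hN _ (hM _ (h_lt n)).2.2).2.1
  have hmono : StrictMono h := strictMono_nat_of_lt_succ fun n => (h_lt_M n).trans (M_lt_h n)
  have hmono' : StrictMono (M ∘ h) :=
    strictMono_nat_of_lt_succ fun n => (M_lt_h n).trans (h_lt_M (n + 1))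
  have hsup : ⨆ n, M (h n) = ⨆ n, h n := le_antisymm
    (Ordinal.iSup_le fun n => (M_lt_h n).le.trans (Ordinal.le_iSup h (n + 1)))
    (Ordinal.iSup_le fun n => (h_lt_M n).le.trans (Ordinal.le_iSup (M ∘ h) n))
  have hlt : ⨆ n, h n < o :=
    Ordinal.lift_iSup_lt_of_lt_cof (by simpa using ho) h_lt
  refine ⟨⨆ n, h n, hC.iSup_mem hmono hlt fun n => ⟨n + 1, n.le_succ, ?_⟩, ?_⟩
  · rw [h_succ]; exact (hN _ (hM _ (h_lt n)).2.2).1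
  · rw [← hsup]
    exact hD.iSup_mem hmono' (hsup ▸ hlt) fun n => ⟨n, le_rfl, (hM _ (h_lt n)).1⟩

theorem isStationaryIn (ho : ℵ₀ < o.cof) (hC : IsClubIn C o) : IsStationaryIn C o :=
  ⟨hC.1, fun _ hD => hC.inter_nonempty ho hD⟩

end IsClubIn

theorem isClubIn_Iio (o : Ordinal) : IsClubIn (Iio o) o :=
  ⟨subset_rfl, fun a ha => ⟨a, ha, le_rfl, ha⟩, fun _ ha _ _ => ha⟩

theorem exists_subset_of_forall_inter_nonempty {o : Ordinal} (ho : ℵ₀ < o.cof) {I : Type*}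
    {d : I → Set Ordinal} (hd : ∀ i, IsStationaryIn (d i) o)
    (hdense : ∀ S, IsStationaryIn S o → ∃ i, d i ⊆ S) {X : Set Ordinal}
    (hX : ∀ i, (X ∩ d i).Nonempty) : ∃ j, d j ⊆ X := by
  have hstat : IsStationaryIn (X ∩ Iio o) o := by
    refine ⟨inter_subset_right, fun C hC => ?_⟩
    obtain ⟨i, hiC⟩ := hdense C (hC.isStationaryIn ho)
    obtain ⟨x, hxX, hxd⟩ := hX i
    exact ⟨x, ⟨hxX, (hd i).1 hxd⟩, hiC hxd⟩
  obtain ⟨j, hj⟩ := hdense _ hstat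
  exact ⟨j, hj.trans inter_subset_left⟩

theorem not_exists_good_choice_completeBipartiteGraph {α I A B : Type*} {d : I → Set α}
    (hd : ∀ X : Set α, (∀ i, (X ∩ d i).Nonempty) → ∃ j, d j ⊆ X) {f : A → I} {g : B → I}
    (hf : Surjective f) (hg : Surjective g) :
    ¬ ∃ c : A ⊕ B → α, (∀ v, c v ∈ Sum.elim (d ∘ f) (d ∘ g) v) ∧
      ∀ v w, (completeBipartiteGraph A B).Adj v w → c v ≠ c w := by
  rintro ⟨c, hc, hgood⟩
  obtain ⟨j, hj⟩ : ∃ j, d j ⊆ range (c ∘ Sum.inl) := hd _ fun i => by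
    obtain ⟨a, rfl⟩ := hf i
    exact ⟨c (Sum.inl a), mem_range_self a, hc (Sum.inl a)⟩
  obtain ⟨b, rfl⟩ := hg j
  obtain ⟨a, ha⟩ := hj (hc (Sum.inr b))
  exact hgood (Sum.inl a) (Sum.inr b) (by simp) ha

/-- If λ ≥ den(stat_κ), then SList(K_{λ,λ}, κ) fails. -/
theorem slist_fails_of_dense {A B : Type} (κ lam : Cardinal)
    (hreg : κ.IsRegular) (hunc : ℵ₀ < κ)
    (hA : #A = lam) (hB : #B = lam)
    (hden : ∃ (I : Type) (d : I → Set Ordinal), #I ≤ lam ∧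
      (∀ i, IsStationaryIn (d i) κ.ord) ∧
      ∀ S, IsStationaryIn S κ.ord → ∃ i, d i ⊆ S) :
    ∃ L : A ⊕ B → Set Ordinal, (∀ v, IsStationaryIn (L v) κ.ord) ∧
      ¬ ∃ c : A ⊕ B → Ordinal, (∀ v, c v ∈ L v) ∧
        ∀ v w, (completeBipartiteGraph A B).Adj v w → c v ≠ c w := by
  obtain ⟨I, d, hI, hd, hdense⟩ := hden
  have hcof : ℵ₀ < κ.ord.cof := by rwa [hreg.cof_ord]
  have : Nonempty I := (hdense _ ((isClubIn_Iio _).isStationaryIn hcof)).nonempty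
  obtain ⟨eA⟩ : Nonempty (I ↪ A) := (Cardinal.le_def _ _).1 (hA ▸ hI)
  obtain ⟨eB⟩ : Nonempty (I ↪ B) := (Cardinal.le_def _ _).1 (hB ▸ hI)
  refine ⟨Sum.elim (d ∘ invFun eA) (d ∘ invFun eB), fun v => ?_, ?_⟩
  · cases v <;> exact hd _
  · exact not_exists_good_choice_completeBipartiteGraph
      (fun _ => exists_subset_of_forall_inter_nonempty hcof hd hdense)
      (invFun_surjective eA.injective) (invFun_surjective eB.injective)
end

section
/- Let κ be a regular uncountable cardinal and let X = K_{2^κ, κ} be the complete bipartite graph with parts B of size 2^κ and A of size κ. Then the stationary list colorability SList(X, κ) holds: for every list function L assigning to each vertex a stationary subset of κ, there exists a good choice function c of L. -/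
/-!
Enumerate `A` as `⟨a_i : i < κ⟩` and build, by recursion on `i`, an increasing continuous sequence
`γ_i = sup_{j < i} (c_j + 1)` together with choices `c_i ∈ L(a_i)` with `γ_i < c_i < κ`, which
exist because stationary sets are unbounded and `κ` is regular. Then `γ` is a normal function, so
`{γ_i : i < κ}` is a club, and it misses every `c_i` since `γ_i < c_i < γ_{i+1}`. Each `L(b)`,
`b ∈ B`, being stationary, meets this club, and any point of the intersection is a colour for `b`
distinct from all colours on `A`.
-/

open Cardinal Set

open Order

universe u

def IsUnboundedIn (S : Set Ordinal.{u}) (o : Ordinal.{u}) : Prop :=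
  ∀ a < o, ∃ x ∈ S, a < x ∧ x < o

theorem isClubIn_Ioo {a o : Ordinal} (ho : IsSuccLimit o) (ha : a < o) :
    IsClubIn (Ioo a o) o := by
  refine ⟨fun x hx => hx.2, fun b hb => ?_, fun x hx hx0 hlim => ?_⟩
  · exact ⟨max (succ a) b, ⟨(lt_succ a).trans_le (le_max_left _ _), max_lt (ho.succ_lt ha) hb⟩,
      le_max_right _ _, max_lt (ho.succ_lt ha) hb⟩
  · obtain ⟨y, hy, -, hyx⟩ := hlim 0 hx0
    exact ⟨hy.1.trans hyx, hx⟩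

theorem IsStationaryIn.isUnboundedIn {S : Set Ordinal} {o : Ordinal} (hS : IsStationaryIn S o)
    (ho : IsSuccLimit o) : IsUnboundedIn S o := fun a ha => by
  obtain ⟨x, hxS, hxa, hxo⟩ := hS.2 _ (isClubIn_Ioo ho ha)
  exact ⟨x, hxS, hxa, hxo⟩

theorem isClubIn_image_Iio_of_isNormal {f : Ordinal → Ordinal} {o : Ordinal} (hf : IsNormal f)
    (hfo : ∀ i < o, f i < o) : IsClubIn (f '' Iio o) o := by
  refine ⟨image_subset_iff.2 hfo, fun a ha => ⟨f a, mem_image_of_mem f ha,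
    hf.strictMono.le_apply, hfo a ha⟩, fun x hxo hx0 hacc => ?_⟩
  have hlub : IsLUB (f '' Iio o ∩ Iio x) x := by
    refine ⟨fun y hy => hy.2.le, fun u hu => le_of_forall_lt fun b hb => ?_⟩
    obtain ⟨y, hy, hby, hyx⟩ := hacc b hb
    exact hby.trans_le (hu ⟨hy, hyx⟩)
  obtain ⟨i, rfl⟩ := hf.isClub_range.isLUB_mem (inter_subset_left.trans (image_subset_range _ _))
    (by obtain ⟨y, hy, -, hyx⟩ := hacc 0 hx0; exact ⟨y, hy, hyx⟩) hlub
  exact mem_image_of_mem f (hf.strictMono.le_apply.trans_lt hxo)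

section Interleave

variable (next : Ordinal.{u} → Ordinal.{u} → Ordinal.{u})

/-- `interleave next i = sup_{j < i} (c_j + 1)`, where `c_j = next j (interleave next j)` is the
value chosen at stage `j`. -/
noncomputable def interleave : Ordinal.{u} → Ordinal.{u} :=
  wellFounded_lt.fix fun i γ => ⨆ j : Iio i, succ (next j (γ j j.2))

theorem interleave_eq (i : Ordinal) :
    interleave next i = ⨆ j : Iio i, succ (next j (interleave next j)) :=
  wellFounded_lt.fix_eq _ i

theorem succ_next_interleave_le {i j : Ordinal} (hji : j < i) :
    succ (next j (interleave next j)) ≤ interleave next i := by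
  rw [interleave_eq next i]
  exact Ordinal.le_iSup (fun j : Iio i => succ (next j (interleave next j))) ⟨j, hji⟩

variable {next}

theorem isNormal_interleave (hnext : ∀ i g, g < next i g) : IsNormal (interleave next) := by
  refine isNormal_iff.2 ⟨fun j i hji => ?_, fun i hi a ha => ?_⟩
  · exact (hnext j _).trans ((lt_succ _).trans_le (succ_next_interleave_le next hji))
  · rw [interleave_eq]
    exact Ordinal.iSup_le fun j =>
      (succ_next_interleave_le next (lt_succ j.1)).trans (ha _ (hi.succ_lt j.2))

theorem next_interleave_notMem_range (hnext : ∀ i g, g < next i g) (i : Ordinal) :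
    next i (interleave next i) ∉ range (interleave next) := by
  rintro ⟨k, hk⟩
  rcases le_or_gt k i with hki | hik
  · exact ((isNormal_interleave hnext).monotone hki).not_gt (hk ▸ hnext i _)
  · exact (lt_succ _).not_ge (hk ▸ succ_next_interleave_le next hik)

theorem interleave_lt_ord {κ : Cardinal.{u}} (hκ : κ.IsRegular)
    (hnext : ∀ i < κ.ord, ∀ g < κ.ord, next i g < κ.ord) {i : Ordinal} (hi : i < κ.ord) :
    interleave next i < κ.ord := by
  induction i using WellFoundedLT.induction with
  | _ i IH =>
    rw [interleave_eq]
    apply Ordinal.lift_iSup_lt_of_lt_cof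
    · rwa [← Ordinal.lift_cof, hκ.cof_ord, mk_Iio_ordinal, lift_lift, lift_lt, ← lt_ord]
    · exact fun j => (isSuccLimit_ord hκ.aleph0_le).succ_lt
        (hnext j (j.2.trans hi) _ (IH j j.2 (j.2.trans hi)))

end Interleave

theorem exists_choice_avoiding_isClubIn {ι : Type u} {κ : Cardinal.{u}} (hκ : κ.IsRegular)
    (hι : #ι = κ) {S : ι → Set Ordinal.{u}} (hS : ∀ x, IsUnboundedIn (S x) κ.ord) :
    ∃ c : ι → Ordinal, ∃ C, IsClubIn C κ.ord ∧ ∀ x, c x ∈ S x ∧ c x ∉ C := by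
  obtain ⟨e⟩ : Nonempty (ι ≃ Iio κ.ord) := by
    rw [← lift_mk_eq'.{u, u + 1}, mk_Iio_ordinal, card_ord, lift_lift, hι]
  choose f hf using hS
  -- The fallback `succ g` makes `next` inflationary everywhere, so `interleave next` is normal.
  let next i g := if h : i < κ.ord ∧ g < κ.ord then f (e.symm ⟨i, h.1⟩) g h.2 else succ g
  have hnext : ∀ i g, g < next i g := fun i g => by
    unfold next; split_ifs with h
    exacts [(hf _ g h.2).2.1, lt_succ g]
  have hlt : ∀ i < κ.ord, ∀ g < κ.ord, next i g < κ.ord := fun i hi g hg => by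
    simp only [next, dif_pos (And.intro hi hg)]
    exact (hf _ g hg).2.2
  have hmem : ∀ x, ∀ g < κ.ord, next (e x) g ∈ S x := fun x g hg => by
    dsimp only [next]
    rw [dif_pos ⟨(e x).2, hg⟩]
    convert (hf x g hg).1 using 2
    exact e.symm_apply_apply x
  have hγ : ∀ i < κ.ord, interleave next i < κ.ord := fun i hi => interleave_lt_ord hκ hlt hi
  refine ⟨fun x => next (e x) (interleave next (e x)), _,
    isClubIn_image_Iio_of_isNormal (isNormal_interleave hnext) hγ, fun x => ⟨?_, fun h => ?_⟩⟩
  · exact hmem x _ (hγ _ (e x).2)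
  · exact next_interleave_notMem_range hnext _ (image_subset_range _ _ h)

theorem slist_holds_complete_bipartite_general {A B : Type} (κ : Cardinal)
    (hreg : κ.IsRegular)
    (hA : #A = κ)
    (L : A ⊕ B → Set Ordinal) (hL : ∀ v, IsStationaryIn (L v) κ.ord) :
    ∃ c : A ⊕ B → Ordinal, (∀ v, c v ∈ L v) ∧
      ∀ v w, (completeBipartiteGraph A B).Adj v w → c v ≠ c w := by
  obtain ⟨cA, C, hC, hcA⟩ := exists_choice_avoiding_isClubIn hreg hA
    fun a => (hL (.inl a)).isUnboundedIn (isSuccLimit_ord hreg.aleph0_le)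
  choose cB hcB using fun b => (hL (.inr b)).2 C hC
  refine ⟨Sum.elim cA cB, ?_, ?_⟩
  · rintro (a | b)
    exacts [(hcA a).1, (hcB b).1]
  · rintro (a | b) (a' | b') hadj
    · simp at hadj
    · exact fun (h : cA a = cB b') => (hcA a).2 (h ▸ (hcB b').2)
    · exact fun (h : cB b = cA a') => (hcA a').2 (h ▸ (hcB b).2)
    · simp at hadj

/-- SList(K_{2^κ,κ}, κ) holds. -/
theorem slist_holds_complete_bipartite {A B : Type} (κ : Cardinal)
    (hreg : κ.IsRegular) (hunc : ℵ₀ < κ)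
    (hA : #A = κ) (hB : #B = 2 ^ κ)
    (L : A ⊕ B → Set Ordinal) (hL : ∀ v, IsStationaryIn (L v) κ.ord) :
    ∃ c : A ⊕ B → Ordinal, (∀ v, c v ∈ L v) ∧
      ∀ v w, (completeBipartiteGraph A B).Adj v w → c v ≠ c w :=
  slist_holds_complete_bipartite_general κ hreg hA L hL
end

section
/- Let κ be a regular uncountable cardinal and X = K_{2^κ, κ} the complete bipartite graph with parts A of size κ and B of size 2^κ. Then the restricted list colorability RList(X, κ) fails: there is a list function L : V → [κ]^κ such that no choice function of L is a good coloring. (Identifying A with κ and B with [κ]^κ, set L(v) = κ \ v for v ∈ A and L(S) = S for S ∈ B = [κ]^κ.) -/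
/-!
Identify `A` with `κ` and let `B` cover `[κ]^κ`, which has at most `2^κ` elements. The vertex
`a ∈ A` gets the tail `[a, κ)` as its list and a vertex standing for `S ∈ [κ]^κ` gets `S`.
For any choice `c` on `A` we have `c a ≥ a`, so the colours used on `A` form an unbounded
subset of `κ`, which by regularity lies in `[κ]^κ`; the vertex of `B` standing for it must
repeat one of these colours, although it is adjacent to all of `A`.
-/

open Cardinal Set

namespace Cardinal

universe u

theorem mk_Iio_ord (κ : Cardinal.{u}) : #(Iio κ.ord) = lift.{u + 1} κ := by
  rw [mk_Iio_ordinal, card_ord]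

theorem IsRegular.mk_eq_of_forall_exists_le {κ : Cardinal.{u}} (hκ : κ.IsRegular)
    {T : Set Ordinal.{u}} (hT : T ⊆ Iio κ.ord) (hunb : ∀ α < κ.ord, ∃ t ∈ T, α ≤ t) :
    #T = Cardinal.lift.{u + 1} κ := by
  refine le_antisymm (mk_Iio_ord κ ▸ mk_le_mk_of_subset hT) ?_
  by_contra! hsmall
  have hsup : sSup T < κ.ord := by
    refine Ordinal.sSup_lt_of_lt_cof ?_ hT
    rwa [← Ordinal.lift_cof, hκ.cof_ord]
  obtain ⟨t, ht, hle⟩ := hunb _ ((isSuccLimit_ord hκ.aleph0_le).succ_lt hsup)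
  exact (Order.lt_succ (sSup T)).not_ge (hle.trans (le_csSup (bddAbove_Iio.mono hT) ht))

/-- The family `[κ]^κ`, with `κ` read as the set of ordinals below `κ.ord`. -/
def largeSubsets (κ : Cardinal.{u}) : Set (Set Ordinal.{u}) :=
  {S | S ⊆ Iio κ.ord ∧ #S = lift.{u + 1} κ}

theorem mk_largeSubsets_le (κ : Cardinal.{u}) : #(largeSubsets κ) ≤ lift.{u + 1} (2 ^ κ) :=
  calc #(largeSubsets κ) ≤ #(𝒫 Iio κ.ord) := mk_le_mk_of_subset fun _ hS ↦ hS.1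
    _ = lift.{u + 1} (2 ^ κ) := by rw [mk_powerset, mk_Iio_ord, lift_two_power]

theorem IsRegular.mem_largeSubsets_of_forall_exists_le {κ : Cardinal.{u}} (hκ : κ.IsRegular)
    {T : Set Ordinal.{u}} (hT : T ⊆ Iio κ.ord) (hunb : ∀ α < κ.ord, ∃ t ∈ T, α ≤ t) :
    T ∈ largeSubsets κ :=
  ⟨hT, hκ.mk_eq_of_forall_exists_le hT hunb⟩

theorem IsRegular.Ico_mem_largeSubsets {κ : Cardinal.{u}} (hκ : κ.IsRegular) {α : Ordinal.{u}}
    (hα : α < κ.ord) : Ico α κ.ord ∈ largeSubsets κ :=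
  hκ.mem_largeSubsets_of_forall_exists_le (fun _ hβ ↦ hβ.2)
    fun β hβ ↦ ⟨max α β, ⟨le_max_left _ _, max_lt hα hβ⟩, le_max_right _ _⟩

end Cardinal

theorem not_exists_proper_choice_completeBipartiteGraph {A B α : Type*} (L : A ⊕ B → Set α)
    (hL : ∀ c : A → α, (∀ a, c a ∈ L (.inl a)) → ∃ b, L (.inr b) ⊆ range c) :
    ¬ ∃ c : A ⊕ B → α, (∀ v, c v ∈ L v) ∧
      ∀ v w, (completeBipartiteGraph A B).Adj v w → c v ≠ c w := by
  rintro ⟨c, hcL, hproper⟩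
  obtain ⟨b, hb⟩ := hL (c ∘ .inl) fun a ↦ hcL (.inl a)
  obtain ⟨a, ha⟩ := hb (hcL (.inr b))
  exact hproper (.inl a) (.inr b) (by simp) ha

theorem rlist_fails_complete_bipartite_general {A B : Type} (κ : Cardinal)
    (hreg : κ.IsRegular)
    (hA : #A = κ) (hB : #B = 2 ^ κ) :
    ∃ L : A ⊕ B → Set Ordinal,
      (∀ v, L v ⊆ Set.Iio κ.ord ∧ #(L v) = Cardinal.lift.{1} κ) ∧
      ¬ ∃ c : A ⊕ B → Ordinal, (∀ v, c v ∈ L v) ∧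
        ∀ v w, (completeBipartiteGraph A B).Adj v w → c v ≠ c w := by
  obtain ⟨e⟩ : Nonempty (A ≃ Iio κ.ord) := by
    rw [← lift_mk_eq', mk_Iio_ord, hA, lift_uzero]
  obtain ⟨f⟩ : Nonempty (largeSubsets κ ↪ B) := by
    rw [← lift_mk_le', hB, lift_uzero]
    exact mk_largeSubsets_le κ
  have : Nonempty (largeSubsets κ) := ⟨⟨Iio κ.ord, subset_rfl, mk_Iio_ord κ⟩⟩
  obtain ⟨g, hg⟩ : ∃ g : B → largeSubsets κ, g.Surjective :=
    ⟨Function.invFun f, Function.invFun_surjective f.injective⟩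
  let L : A ⊕ B → Set Ordinal := Sum.elim (fun a ↦ Ico (e a) κ.ord) (fun b ↦ g b)
  refine ⟨L, ?_, not_exists_proper_choice_completeBipartiteGraph L fun c hc ↦ ?_⟩
  · rintro (a | b)
    · exact hreg.Ico_mem_largeSubsets (e a).2
    · exact (g b).2
  · have hrange : range c ∈ largeSubsets κ :=
      hreg.mem_largeSubsets_of_forall_exists_le (range_subset_iff.2 fun a ↦ (hc a).2)
        fun α hα ↦ ⟨c (e.symm ⟨α, hα⟩), mem_range_self _,
          by simpa using (hc (e.symm ⟨α, hα⟩)).1⟩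
    obtain ⟨b, hb⟩ := hg ⟨range c, hrange⟩
    exact ⟨b, by simp [L, hb]⟩

/-- RList(K_{2^κ,κ}, κ) fails. -/
theorem rlist_fails_complete_bipartite {A B : Type} (κ : Cardinal)
    (hreg : κ.IsRegular) (hunc : ℵ₀ < κ)
    (hA : #A = κ) (hB : #B = 2 ^ κ) :
    ∃ L : A ⊕ B → Set Ordinal,
      (∀ v, L v ⊆ Set.Iio κ.ord ∧ #(L v) = Cardinal.lift.{1} κ) ∧
      ¬ ∃ c : A ⊕ B → Ordinal, (∀ v, c v ∈ L v) ∧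
        ∀ v w, (completeBipartiteGraph A B).Adj v w → c v ≠ c w :=
  rlist_fails_complete_bipartite_general κ hreg hA hB
end

section
/- Let κ be a regular uncountable cardinal and λ a cardinal, and let X = K_{λ,λ} be the complete bipartite graph with both parts of size λ. If λ < r_κ (the κ-reaping number), then the restricted list colorability RList(X, κ) holds: every list function L : V → [κ]^κ admits a good choice function. -/
/-!
Colour the first side of `K_{λ,λ}` from a set `S` and the second side from its complement;
then no edge is monochromatic. When `λ` is infinite, the at most `λ < r_κ` lists do not form a
reaping family, so some `κ`-set `S` splits every list and such colours exist. When `λ` is finite,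
take for `S` any finite set of colours for the first side: the lists are infinite, so each list of
the second side still has a colour outside `S`.
-/

open Cardinal Set

/-- The family of subsets of κ of cardinality κ. -/
def kappaSets (κ : Cardinal.{0}) : Set (Set Ordinal) :=
  {A | A ⊆ Set.Iio κ.ord ∧ #A = Cardinal.lift.{1} κ}

/-- A κ-splits B: both B ∩ A and B \ A have cardinality κ. -/
def kSplits (κ : Cardinal.{0}) (A B : Set Ordinal) : Prop :=
  #(B ∩ A : Set Ordinal) = Cardinal.lift.{1} κ ∧
  #(B \ A : Set Ordinal) = Cardinal.lift.{1} κ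

/-- R is a κ-reaping family. -/
def IsReaping (κ : Cardinal.{0}) (R : Set (Set Ordinal)) : Prop :=
  R ⊆ kappaSets κ ∧ ∀ A ∈ kappaSets κ, ∃ B ∈ R, ¬ kSplits κ A B

/-- The κ-reaping number r_κ. -/
noncomputable def reapingNumber (κ : Cardinal.{0}) : Cardinal.{1} :=
  sInf {c | ∃ R : Set (Set Ordinal), IsReaping κ R ∧ #R = c}

def SimpleGraph.IsListColoring {V α : Type*} (G : SimpleGraph V) (L : V → Set α) (c : V → α) :
    Prop :=
  (∀ v, c v ∈ L v) ∧ ∀ v w, G.Adj v w → c v ≠ c w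

theorem exists_isListColoring_completeBipartiteGraph_of_separating {A B α : Type*}
    (L : A ⊕ B → Set α) (S : Set α) (hA : ∀ a, (L (.inl a) ∩ S).Nonempty)
    (hB : ∀ b, (L (.inr b) \ S).Nonempty) :
    ∃ c, (completeBipartiteGraph A B).IsListColoring L c := by
  choose f hf using hA
  choose g hg using hB
  refine ⟨Sum.elim f g, ?_, ?_⟩
  · rintro (a | b)
    exacts [(hf a).1, (hg b).1]
  · rintro (a | b) (a' | b') hadj
    · simp at hadj
    · exact fun (h : f a = g b') => (hg b').2 (h ▸ (hf a).2)
    · exact fun (h : g b = f a') => (hg b).2 (h ▸ (hf a').2)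
    · simp at hadj

theorem exists_isListColoring_completeBipartiteGraph_of_finite {A B α : Type*} [Finite A]
    (L : A ⊕ B → Set α) (hA : ∀ a, (L (.inl a)).Nonempty) (hB : ∀ b, (L (.inr b)).Infinite) :
    ∃ c, (completeBipartiteGraph A B).IsListColoring L c := by
  choose f hf using hA
  exact exists_isListColoring_completeBipartiteGraph_of_separating L (range f)
    (fun a => ⟨f a, hf a, mem_range_self a⟩) fun b => ((hB b).sdiff (finite_range f)).nonempty

theorem infinite_of_mem_kappaSets {κ : Cardinal.{0}} (hκ : ℵ₀ ≤ κ) {A : Set Ordinal}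
    (hA : A ∈ kappaSets κ) : A.Infinite := by
  rw [← infinite_coe_iff, infinite_iff, hA.2]
  simpa using hκ

theorem kSplits.nonempty {κ : Cardinal.{0}} (hκ : κ ≠ 0) {A B : Set Ordinal}
    (h : kSplits κ A B) : (B ∩ A).Nonempty ∧ (B \ A).Nonempty := by
  have hκ' : lift.{1} κ ≠ 0 := mt lift_eq_zero.mp hκ
  exact ⟨nonempty_coe_sort.mp (mk_ne_zero_iff.mp (h.1 ▸ hκ')),
    nonempty_coe_sort.mp (mk_ne_zero_iff.mp (h.2 ▸ hκ'))⟩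

theorem exists_kSplits_of_mk_lt_reapingNumber {κ : Cardinal.{0}} {R : Set (Set Ordinal)}
    (hR : R ⊆ kappaSets κ) (hcard : #R < reapingNumber κ) :
    ∃ S ∈ kappaSets κ, ∀ B ∈ R, kSplits κ S B := by
  by_contra! h
  exact hcard.not_ge (csInf_le' ⟨R, ⟨hR, h⟩, rfl⟩)

theorem rlist_of_lt_reaping_general {A B : Type} (κ lam : Cardinal.{0})
    (hunc : ℵ₀ < κ)
    (hA : #A = lam) (hB : #B = lam)
    (hlt : Cardinal.lift.{1} lam < reapingNumber κ)
    (L : A ⊕ B → Set Ordinal) (hL : ∀ v, L v ∈ kappaSets κ) :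
    ∃ c : A ⊕ B → Ordinal, (∀ v, c v ∈ L v) ∧
      ∀ v w, (completeBipartiteGraph A B).Adj v w → c v ≠ c w := by
  have hLinf v : (L v).Infinite := infinite_of_mem_kappaSets hunc.le (hL v)
  rcases lt_or_ge lam ℵ₀ with hfin | hinf
  · have : Finite A := lt_aleph0_iff_finite.mp (hA ▸ hfin)
    exact exists_isListColoring_completeBipartiteGraph_of_finite L
      (fun a => (hLinf _).nonempty) fun b => hLinf _
  · have hsum : #(A ⊕ B) = lam := by rw [mk_sum, hA, hB, lift_id, add_eq_self hinf]
    have hrange : #(range L) < reapingNumber κ := by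
      refine lt_of_le_of_lt ?_ hlt
      simpa [hsum] using mk_range_le_lift (f := L)
    obtain ⟨S, -, hS⟩ :=
      exists_kSplits_of_mk_lt_reapingNumber (range_subset_iff.mpr hL) hrange
    have hκ : κ ≠ 0 := (aleph0_pos.trans hunc).ne'
    exact exists_isListColoring_completeBipartiteGraph_of_separating L S
      (fun a => (hS _ ⟨_, rfl⟩).nonempty hκ |>.1) fun b => (hS _ ⟨_, rfl⟩).nonempty hκ |>.2

/-- if λ < r_κ, then RList(K_{λ,λ}, κ) holds. -/
theorem rlist_of_lt_reaping {A B : Type} (κ lam : Cardinal.{0})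
    (hreg : κ.IsRegular) (hunc : ℵ₀ < κ)
    (hA : #A = lam) (hB : #B = lam)
    (hlt : Cardinal.lift.{1} lam < reapingNumber κ)
    (L : A ⊕ B → Set Ordinal) (hL : ∀ v, L v ∈ kappaSets κ) :
    ∃ c : A ⊕ B → Ordinal, (∀ v, c v ∈ L v) ∧
      ∀ v w, (completeBipartiteGraph A B).Adj v w → c v ≠ c w :=
  rlist_of_lt_reaping_general κ lam hunc hA hB hlt L hL
end

section
/- Let κ be a regular uncountable cardinal and λ a cardinal, and let X = K_{λ,λ}. If λ ≥ r_κ, then RList(X, κ) fails: there is a list function L : V → [κ]^κ with no good choice function. (Take a κ-reaping family R of size r_κ and let the lists on both parts enumerate {X \ i : X ∈ R, i < κ}.) -/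
/-!
Every κ-reaping family has size at least κ: fewer than κ sets of size κ are split simultaneously
by the union of the intervals `(c, h c]` over the closure points `c` of a function `h` that
bounds the next element of each set after a given ordinal (closure points are cofinal in κ since
κ is regular and uncountable). So if λ ≥ r_κ, both sides of K_{λ,λ} can carry as lists all tails
`X \ i` with `X` in a reaping family `R` and `i < κ`. For a choice function `c`, the set `S` of
colours on the left side meets every `X ∈ R` cofinally, so some `X ∈ R` is not split by `S`:
`X \ S` is bounded by some `i`, and the right vertex with list `X \ i` takes a colour in `S`.
-/

open Cardinal Set

universe u v

theorem Cardinal.exists_surjective_of_lift_mk_le {α : Type u} {β : Type v} [Nonempty α]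
    (h : Cardinal.lift.{v} #α ≤ Cardinal.lift.{u} #β) : ∃ f : β → α, Function.Surjective f :=
  let ⟨e⟩ := Cardinal.lift_mk_le'.1 h
  ⟨Function.invFun e, Function.invFun_surjective e.injective⟩

def IsCofinalBelow (o : Ordinal) (S : Set Ordinal) : Prop :=
  ∀ i < o, ∃ x ∈ S, i ≤ x

theorem IsCofinalBelow.mono {o : Ordinal} {S T : Set Ordinal} (hST : S ⊆ T)
    (hS : IsCofinalBelow o S) : IsCofinalBelow o T := fun i hi =>
  let ⟨x, hx, hix⟩ := hS i hi
  ⟨x, hST hx, hix⟩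

section Regular

variable {κ : Cardinal.{0}} (hreg : κ.IsRegular)
include hreg

theorem mk_eq_lift_iff_isCofinalBelow {S : Set Ordinal} (hS : S ⊆ Iio κ.ord) :
    #S = Cardinal.lift.{1} κ ↔ IsCofinalBelow κ.ord S := by
  constructor
  · intro hcard i hi
    by_contra! hbdd
    have : #S ≤ Cardinal.lift.{1} i.card := by
      simpa using mk_le_mk_of_subset (show S ⊆ Iio i from hbdd)
    rw [hcard, Cardinal.lift_le] at this
    exact (Cardinal.lt_ord.1 hi).not_ge this
  · intro hcof
    refine le_antisymm (by simpa using mk_le_mk_of_subset hS) (not_lt.1 fun hlt => ?_)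
    have hsup : sSup S < κ.ord := by
      refine Ordinal.sSup_lt_of_lt_cof ?_ hS
      rwa [← Ordinal.lift_cof, hreg.cof_ord]
    obtain ⟨x, hx, hsx⟩ :=
      hcof _ ((Cardinal.isSuccLimit_ord hreg.aleph0_le).succ_lt hsup)
    exact (Order.lt_succ (sSup S)).not_ge
      (hsx.trans (le_csSup ⟨κ.ord, fun y hy => (hS hy).le⟩ hx))

theorem mem_kappaSets_iff {S : Set Ordinal} :
    S ∈ kappaSets κ ↔ S ⊆ Iio κ.ord ∧ IsCofinalBelow κ.ord S :=
  and_congr_right (mk_eq_lift_iff_isCofinalBelow hreg)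

theorem kSplits_iff {S X : Set Ordinal} (hX : X ∈ kappaSets κ) :
    kSplits κ S X ↔ IsCofinalBelow κ.ord (X ∩ S) ∧ IsCofinalBelow κ.ord (X \ S) :=
  and_congr (mk_eq_lift_iff_isCofinalBelow hreg (inter_subset_left.trans hX.1))
    (mk_eq_lift_iff_isCofinalBelow hreg (sdiff_subset.trans hX.1))

theorem diff_Iio_mem_kappaSets {X : Set Ordinal} (hX : X ∈ kappaSets κ) {i : Ordinal}
    (hi : i < κ.ord) : X \ Iio i ∈ kappaSets κ := by
  rw [mem_kappaSets_iff hreg] at hX ⊢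
  refine ⟨sdiff_subset.trans hX.1, fun j hj => ?_⟩
  obtain ⟨x, hx, hjx⟩ := hX.2 (max i j) (max_lt hi hj)
  exact ⟨x, ⟨hx, not_lt.2 ((le_max_left i j).trans hjx)⟩, (le_max_right i j).trans hjx⟩

theorem exists_monotoneOn_bound {F : Set (Set Ordinal)}
    (hF : F ⊆ kappaSets κ) (hcard : #F < Cardinal.lift.{1} κ) :
    ∃ h : Ordinal → Ordinal, MonotoneOn h (Iio κ.ord) ∧ (∀ β < κ.ord, h β < κ.ord) ∧
      ∀ X ∈ F, ∀ β < κ.ord, ∃ x ∈ X, β < x ∧ x ≤ h β := by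
  have hne : ∀ X : F, ∀ β < κ.ord, (X.1 ∩ Ioi β).Nonempty := fun X β hβ => by
    obtain ⟨x, hx, hβx⟩ := ((mem_kappaSets_iff hreg).1 (hF X.2)).2 _
      ((Cardinal.isSuccLimit_ord hreg.aleph0_le).succ_lt hβ)
    exact ⟨x, hx, Order.succ_le_iff.1 hβx⟩
  have hnext : ∀ (X : F), ∀ β < κ.ord, sInf (X.1 ∩ Ioi β) ∈ X.1 ∩ Ioi β :=
    fun X β hβ => csInf_mem (hne X β hβ)
  have hbdd : ∀ β < κ.ord, BddAbove (range fun X : F => sInf (X.1 ∩ Ioi β)) :=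
    fun β hβ => ⟨κ.ord, forall_mem_range.2 fun X => ((hF X.2).1 (hnext X β hβ).1).le⟩
  refine ⟨fun β => ⨆ X : F, sInf (X.1 ∩ Ioi β), fun β _ β' hβ' hββ' => ?_, fun β hβ => ?_,
    fun X hX β hβ => ?_⟩
  · exact ciSup_mono (hbdd β' hβ') fun X => csInf_le_csInf (OrderBot.bddBelow _)
      (hne X β' hβ') (inter_subset_inter_right _ (Ioi_subset_Ioi hββ'))
  · refine Ordinal.lift_iSup_lt_of_lt_cof ?_ fun X => (hF X.2).1 (hnext X β hβ).1
    rwa [Cardinal.lift_uzero, ← Ordinal.lift_cof, hreg.cof_ord]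
  · exact ⟨_, (hnext ⟨X, hX⟩ β hβ).1, (hnext ⟨X, hX⟩ β hβ).2, le_ciSup (hbdd β hβ) ⟨X, hX⟩⟩

end Regular

theorem Iio_ord_mem_kappaSets (κ : Cardinal.{0}) : Iio κ.ord ∈ kappaSets κ :=
  ⟨subset_rfl, by simp⟩

theorem IsReaping.nonempty {κ : Cardinal.{0}} {R : Set (Set Ordinal)} (hR : IsReaping κ R) :
    R.Nonempty :=
  let ⟨X, hX, _⟩ := hR.2 _ (Iio_ord_mem_kappaSets κ)
  ⟨X, hX⟩

theorem isReaping_kappaSets {κ : Cardinal.{0}} (hκ : κ ≠ 0) : IsReaping κ (kappaSets κ) := by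
  refine ⟨subset_rfl, fun X hX => ⟨X, hX, fun hsplit => hκ ?_⟩⟩
  simpa [eq_comm] using hsplit.2

theorem exists_isReaping_mk_eq_reapingNumber {κ : Cardinal.{0}} (hκ : κ ≠ 0) :
    ∃ R, IsReaping κ R ∧ #R = reapingNumber κ := by
  have hne : {c | ∃ R : Set (Set Ordinal), IsReaping κ R ∧ #R = c}.Nonempty :=
    ⟨_, _, isReaping_kappaSets hκ, rfl⟩
  exact csInf_mem hne

section Uncountable

variable {κ : Cardinal.{0}} (hreg : κ.IsRegular) (hunc : ℵ₀ < κ)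
include hreg hunc

theorem exists_closure_point_gt {h : Ordinal → Ordinal} (hmono : MonotoneOn h (Iio κ.ord))
    (hlt : ∀ β < κ.ord, h β < κ.ord) {i : Ordinal} (hi : i < κ.ord) :
    ∃ c, i < c ∧ c < κ.ord ∧ ∀ γ < c, h γ < c := by
  have hlim := Cardinal.isSuccLimit_ord hreg.aleph0_le
  set f := fun β => Order.succ (h β)
  set c := Ordinal.nfp f (Order.succ i)
  have hc : c < κ.ord := Cardinal.nfp_lt_ord_of_isRegular hreg hunc.ne'
    (fun β hβ => hlim.succ_lt (hlt β hβ)) (hlim.succ_lt hi)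
  refine ⟨c, (Order.lt_succ i).trans_le (Ordinal.le_nfp f _), hc, fun γ hγ => ?_⟩
  obtain ⟨n, hn⟩ := Ordinal.lt_nfp_iff.1 hγ
  have hnc : f^[n] (Order.succ i) < κ.ord := (Ordinal.iterate_le_nfp f _ n).trans_lt hc
  calc h γ ≤ h (f^[n] (Order.succ i)) := hmono (hγ.trans hc) hnc hn.le
    _ < f^[n + 1] (Order.succ i) := by
      rw [Function.iterate_succ_apply']
      exact Order.lt_succ _
    _ ≤ c := Ordinal.iterate_le_nfp f _ _

theorem exists_kSplits_of_mk_lt {F : Set (Set Ordinal)} (hF : F ⊆ kappaSets κ)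
    (hFne : F.Nonempty) (hcard : #F < Cardinal.lift.{1} κ) :
    ∃ S ∈ kappaSets κ, ∀ X ∈ F, kSplits κ S X := by
  obtain ⟨h, hmono, hlt, hbound⟩ := exists_monotoneOn_bound hreg hF hcard
  -- For closure points `c < c'` of `h`, each `X ∈ F` has a point in `(c, h c] ⊆ S` and one in
  -- `(h c, h (h c)]`, which lies strictly between the intervals of `c` and `c'`.
  set S := ⋃ c ∈ {c | c < κ.ord ∧ ∀ γ < c, h γ < c}, Ioc c (h c)
  have hin : ∀ X ∈ F, IsCofinalBelow κ.ord (X ∩ S) := by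
    intro X hX i hi
    obtain ⟨c, hic, hc, hcl⟩ := exists_closure_point_gt hreg hunc hmono hlt hi
    obtain ⟨x, hxX, hcx, hxh⟩ := hbound X hX c hc
    exact ⟨x, ⟨hxX, mem_biUnion ⟨hc, hcl⟩ ⟨hcx, hxh⟩⟩, (hic.trans hcx).le⟩
  have hout : ∀ X ∈ F, IsCofinalBelow κ.ord (X \ S) := by
    intro X hX i hi
    obtain ⟨c, hic, hc, hcl⟩ := exists_closure_point_gt hreg hunc hmono hlt hi
    obtain ⟨y, -, hcy, hyh⟩ := hbound X hX c hc
    obtain ⟨x, hxX, hhx, hxh⟩ := hbound X hX (h c) (hlt c hc)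
    refine ⟨x, ⟨hxX, ?_⟩, (hic.trans (hcy.trans_le hyh |>.trans hhx)).le⟩
    simp only [S, mem_iUnion]
    rintro ⟨c', ⟨hc', hcl'⟩, hc'x, hxc'⟩
    rcases le_or_gt c' c with hle | hcc'
    · exact (hxc'.trans (hmono hc' hc hle)).not_gt hhx
    · exact (hxh.trans_lt (hcl' _ (hcl' c hcc'))).not_gt hc'x
  have hSκ : S ⊆ Iio κ.ord := by
    simp only [S, iUnion_subset_iff]
    exact fun c hc x hx => hx.2.trans_lt (hlt c hc.1)
  obtain ⟨X₀, hX₀⟩ := hFne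
  exact ⟨S, (mem_kappaSets_iff hreg).2 ⟨hSκ, (hin X₀ hX₀).mono inter_subset_right⟩,
    fun X hX => (kSplits_iff hreg (hF hX)).2 ⟨hin X hX, hout X hX⟩⟩

theorem IsReaping.lift_le_mk {R : Set (Set Ordinal)} (hR : IsReaping κ R) :
    Cardinal.lift.{1} κ ≤ #R := by
  by_contra! hlt
  obtain ⟨S, hS, hsplit⟩ := exists_kSplits_of_mk_lt hreg hunc hR.1 hR.nonempty hlt
  obtain ⟨X, hX, hnot⟩ := hR.2 S hS
  exact hnot (hsplit X hX)

theorem lift_le_reapingNumber : Cardinal.lift.{1} κ ≤ reapingNumber κ :=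
  le_csInf ⟨_, _, isReaping_kappaSets hreg.pos.ne', rfl⟩ fun _ ⟨_, hR, hc⟩ =>
    hc ▸ hR.lift_le_mk hreg hunc

end Uncountable

theorem IsReaping.inter_nonempty {κ : Cardinal.{0}} (hreg : κ.IsRegular)
    {R : Set (Set Ordinal)} (hR : IsReaping κ R) {S T : Set Ordinal} (hS : S ⊆ Iio κ.ord)
    (hSR : ∀ X ∈ R, IsCofinalBelow κ.ord (X ∩ S)) (hTR : ∀ X ∈ R, IsCofinalBelow κ.ord (X ∩ T)) :
    (S ∩ T).Nonempty := by
  obtain ⟨X₀, hX₀⟩ := hR.nonempty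
  obtain ⟨X, hX, hnot⟩ :=
    hR.2 S ((mem_kappaSets_iff hreg).2 ⟨hS, (hSR X₀ hX₀).mono inter_subset_right⟩)
  rw [kSplits_iff hreg (hR.1 hX), not_and] at hnot
  obtain ⟨i, hi, hbdd⟩ : ∃ i < κ.ord, ∀ x ∈ X \ S, x < i := by
    simpa [IsCofinalBelow] using hnot (hSR X hX)
  obtain ⟨x, ⟨hxX, hxT⟩, hix⟩ := hTR X hX i hi
  exact ⟨x, by_contra fun hxS => (hbdd x ⟨hxX, hxS⟩).not_ge hix, hxT⟩

theorem isCofinalBelow_inter_range {ι : Type*} {o : Ordinal} {R : Set (Set Ordinal)}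
    {p : ι → R × Iio o} (hp : Function.Surjective p) {c : ι → Ordinal}
    (hc : ∀ a, c a ∈ (p a).1.1 \ Iio (p a).2.1) : ∀ X ∈ R, IsCofinalBelow o (X ∩ range c) := by
  intro X hX i hi
  obtain ⟨a, ha⟩ := hp (⟨X, hX⟩, ⟨i, hi⟩)
  have hca := hc a
  rw [ha] at hca
  exact ⟨c a, ⟨hca.1, a, rfl⟩, not_lt.1 hca.2⟩

/-- if λ ≥ r_κ, then RList(K_{λ,λ}, κ) fails. -/
theorem rlist_fails_of_ge_reaping {A B : Type} (κ lam : Cardinal.{0})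
    (hreg : κ.IsRegular) (hunc : ℵ₀ < κ)
    (hA : #A = lam) (hB : #B = lam)
    (hge : reapingNumber κ ≤ Cardinal.lift.{1} lam) :
    ∃ L : A ⊕ B → Set Ordinal, (∀ v, L v ∈ kappaSets κ) ∧
      ¬ ∃ c : A ⊕ B → Ordinal, (∀ v, c v ∈ L v) ∧
        ∀ v w, (completeBipartiteGraph A B).Adj v w → c v ≠ c w := by
  obtain ⟨R, hR, hRcard⟩ := exists_isReaping_mk_eq_reapingNumber hreg.pos.ne'
  have hκlam := (lift_le_reapingNumber hreg hunc).trans hge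
  have hP : #(R × Iio κ.ord) ≤ Cardinal.lift.{1} lam := by
    rw [mk_prod, lift_id, lift_id, mk_Iio_ordinal, card_ord]
    calc #R * Cardinal.lift.{1} κ ≤ Cardinal.lift.{1} lam * Cardinal.lift.{1} lam :=
          mul_le_mul' (hRcard ▸ hge) hκlam
      _ = Cardinal.lift.{1} lam :=
          mul_eq_self (aleph0_le_lift.2 (hunc.le.trans (lift_le.1 hκlam)))
  have : Nonempty (R × Iio κ.ord) :=
    ⟨(hR.nonempty.to_subtype.some, ⟨0, ord_pos.2 hreg.pos⟩)⟩
  obtain ⟨p, hp⟩ := exists_surjective_of_lift_mk_le (α := R × Iio κ.ord) (β := A)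
    (by rwa [lift_uzero, hA])
  obtain ⟨q, hq⟩ := exists_surjective_of_lift_mk_le (α := R × Iio κ.ord) (β := B)
    (by rwa [lift_uzero, hB])
  set tail : R × Iio κ.ord → Set Ordinal := fun x => x.1.1 \ Iio x.2.1
  have htail : ∀ x, tail x ∈ kappaSets κ :=
    fun x => diff_Iio_mem_kappaSets hreg (hR.1 x.1.2) x.2.2
  refine ⟨Sum.elim (tail ∘ p) (tail ∘ q), Sum.forall.2 ⟨fun a => htail _, fun b => htail _⟩, ?_⟩
  rintro ⟨c, hcL, hgood⟩
  obtain ⟨_, ⟨a, rfl⟩, b, hb⟩ := hR.inter_nonempty hreg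
    (by rintro _ ⟨a, rfl⟩; exact (htail (p a)).1 (hcL (.inl a)))
    (isCofinalBelow_inter_range hp fun a => hcL (.inl a))
    (isCofinalBelow_inter_range hq fun b => hcL (.inr b))
  exact hgood (.inl a) (.inr b) (by simp) hb.symm
end
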